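/- The function t ↦ ln Ξ_*(t)/t on ℝ (assigned the value 0 at t = 0) is Lebesgue integrable on ℝ, and ∫_{−∞}^{∞} ln Ξ_*(t)/t dt = 0. -/

import Mathlib

open Real Filter

/-- The hyperbolic cotangent on ℝ. -/
noncomputable def coth (x : ℝ) : ℝ := Real.cosh x / Real.sinh x

/-- The function `Ξ_*(ξ) = ξ(μ₁ coth(ξH₂) + μ₂ coth(ξH₁) + μ₁μ₂κξ)/(μ₁μ₂κ(λ² + ξ²))`,
extended by `Ξ_*(0) = 1`. -/
noncomputable def XiStar (μ₁ μ₂ H₁ H₂ κ lam : ℝ) (ξ : ℝ) : ℝ :=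
  if ξ = 0 then 1
  else ξ * (μ₁ * coth (ξ * H₂) + μ₂ * coth (ξ * H₁) + μ₁ * μ₂ * κ * ξ) /
        (μ₁ * μ₂ * κ * (lam ^ 2 + ξ ^ 2))

lemma aux_sinh_le_mul_cosh {x : ℝ} (hx : 0 ≤ x) : Real.sinh x ≤ x * Real.cosh x := by
  have hmono : MonotoneOn (fun y : ℝ => y * Real.cosh y - Real.sinh y) (Set.Ici 0) := by
    have hF : ∀ y : ℝ, HasDerivAt (fun y : ℝ => y * Real.cosh y - Real.sinh y)
        (y * Real.sinh y) y := by
      intro y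
      have h1 : HasDerivAt (fun y : ℝ => y * Real.cosh y)
          (1 * Real.cosh y + y * Real.sinh y) y :=
        (hasDerivAt_id y).mul (Real.hasDerivAt_cosh y)
      have : HasDerivAt (fun y : ℝ => y * Real.cosh y - Real.sinh y)
          (1 * Real.cosh y + y * Real.sinh y - Real.cosh y) y := h1.sub (Real.hasDerivAt_sinh y)
      convert this using 1; ring
    apply monotoneOn_of_deriv_nonneg (convex_Ici 0)
    · exact (Continuous.sub (continuous_id.mul Real.continuous_cosh)
        Real.continuous_sinh).continuousOn
    · intro y _; exact (hF y).differentiableAt.differentiableWithinAt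
    · intro y hy
      rw [(hF y).deriv]
      rw [interior_Ici] at hy
      exact mul_nonneg (le_of_lt hy) (Real.sinh_nonneg_iff.2 (le_of_lt hy))
  have h0 : (0:ℝ) * Real.cosh 0 - Real.sinh 0 = 0 := by simp
  have := hmono (Set.self_mem_Ici) (Set.mem_Ici.2 hx) hx
  simp only [h0] at this
  linarith [this]

lemma aux_mul_cosh_le {x : ℝ} (hx : 0 ≤ x) : x * Real.cosh x ≤ (1 + x) * Real.sinh x := by
  rw [Real.cosh_eq, Real.sinh_eq]
  have h1 : Real.exp (-x) * Real.exp x = 1 := by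
    rw [← Real.exp_add]; simp
  have h2 : 2 * x + 1 ≤ Real.exp x * Real.exp x := by
    have h := Real.add_one_le_exp (2 * x)
    rw [← Real.exp_add] at *
    have : x + x = 2 * x := by ring
    rw [this]; linarith
  have h3 : 0 < Real.exp (-x) := Real.exp_pos _
  nlinarith [Real.exp_pos x, mul_nonneg (mul_nonneg hx h3.le) h3.le]

lemma coth_neg' (x : ℝ) : coth (-x) = -coth x := by
  simp [coth, Real.sinh_neg, Real.cosh_neg, neg_div, div_neg]

/-- For `t ≠ 0` and `H > 0`, `1/H ≤ t * coth (t*H) ≤ 1/H + |t|`. -/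
lemma aux_coth_bounds {t H : ℝ} (ht : t ≠ 0) (hH : 0 < H) :
    1 / H ≤ t * coth (t * H) ∧ t * coth (t * H) ≤ 1 / H + |t| := by
  have key : ∀ s : ℝ, 0 < s → 1 / H ≤ s * coth (s * H) ∧ s * coth (s * H) ≤ 1 / H + s := by
    intro s hs
    have hy : 0 < s * H := mul_pos hs hH
    have hsinh : 0 < Real.sinh (s * H) := Real.sinh_pos_iff.2 hy
    have hA := aux_sinh_le_mul_cosh hy.le
    have hB := aux_mul_cosh_le hy.le
    have hcoth : coth (s * H) = Real.cosh (s * H) / Real.sinh (s * H) := rfl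
    constructor
    · rw [hcoth, ← mul_div_assoc, div_le_div_iff₀ hH hsinh]
      nlinarith
    · rw [hcoth, ← mul_div_assoc, div_le_iff₀ hsinh]
      have h5 : (1 / H) * (s * H * Real.cosh (s * H)) = s * Real.cosh (s * H) := by
        field_simp
      have h6 : (1 / H) * ((1 + s * H) * Real.sinh (s * H))
          = (1 / H + s) * Real.sinh (s * H) := by
        field_simp; try ring
      have h7 := mul_le_mul_of_nonneg_left hB (le_of_lt (one_div_pos.mpr hH))
      linarith
  rcases ht.lt_or_gt with h | h
  · have := key (-t) (by linarith)
    rw [show (-t) * H = -(t * H) by ring, coth_neg', mul_neg, neg_mul, neg_neg] at this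
    rw [abs_of_neg h]
    exact this
  · have := key t h
    rw [abs_of_pos h]
    exact this

/-- `t ↦ ln Ξ_*(t)/t` (with value 0 at `t = 0`) is Lebesgue integrable on ℝ
and its integral over ℝ vanishes. (Note: in Lean, division by zero gives 0, and
`log Ξ_*(0) = log 1 = 0`, so the formula below indeed takes the value 0 at `t = 0`.) -/
theorem statement6 (μ₁ μ₂ H₁ H₂ κ lam : ℝ)
    (hμ₁ : 0 < μ₁) (hμ₂ : 0 < μ₂) (hH₁ : 0 < H₁) (hH₂ : 0 < H₂) (hκ : 0 < κ)
    (hlam : lam = Real.sqrt ((μ₁ * H₁ + μ₂ * H₂) / (μ₁ * μ₂ * H₁ * H₂ * κ))) :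
    MeasureTheory.Integrable (fun t : ℝ => Real.log (XiStar μ₁ μ₂ H₁ H₂ κ lam t) / t) ∧
    ∫ t : ℝ, Real.log (XiStar μ₁ μ₂ H₁ H₂ κ lam t) / t = 0 := by
  have hlam2 : lam ^ 2 = (μ₁ * H₁ + μ₂ * H₂) / (μ₁ * μ₂ * H₁ * H₂ * κ) := by
    rw [hlam, sq_sqrt]
    positivity
  have hlampos : 0 < lam := by
    rw [hlam]
    apply Real.sqrt_pos.2
    positivity
  have hkey : μ₁ * μ₂ * κ * lam ^ 2 = μ₁ / H₂ + μ₂ / H₁ := by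
    rw [hlam2]; field_simp
  -- bounds on XiStar
  have hX : ∀ t : ℝ, 1 ≤ XiStar μ₁ μ₂ H₁ H₂ κ lam t ∧
      XiStar μ₁ μ₂ H₁ H₂ κ lam t ≤ 1 + (μ₁ + μ₂) * |t| / (μ₁ * μ₂ * κ * (lam ^ 2 + t ^ 2)) := by
    intro t
    by_cases ht : t = 0
    · subst ht; simp [XiStar]
    · have hD : 0 < μ₁ * μ₂ * κ * (lam ^ 2 + t ^ 2) := by positivity
      have h1 := aux_coth_bounds ht hH₂
      have h2 := aux_coth_bounds ht hH₁
      have hnum : t * (μ₁ * coth (t * H₂) + μ₂ * coth (t * H₁) + μ₁ * μ₂ * κ * t)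
          = μ₁ * (t * coth (t * H₂)) + μ₂ * (t * coth (t * H₁)) + μ₁ * μ₂ * κ * t ^ 2 := by
        ring
      have e1 : μ₁ * (1 / H₂ + |t|) = μ₁ / H₂ + μ₁ * |t| := by ring
      have e2 : μ₂ * (1 / H₁ + |t|) = μ₂ / H₁ + μ₂ * |t| := by ring
      have e1' : μ₁ * (1 / H₂) = μ₁ / H₂ := by ring
      have e2' : μ₂ * (1 / H₁) = μ₂ / H₁ := by ring
      have e3 : μ₁ * μ₂ * κ * (lam ^ 2 + t ^ 2)
          = μ₁ / H₂ + μ₂ / H₁ + μ₁ * μ₂ * κ * t ^ 2 := by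
        rw [← hkey]; ring
      have b1 := mul_le_mul_of_nonneg_left h1.2 hμ₁.le
      have b2 := mul_le_mul_of_nonneg_left h2.2 hμ₂.le
      have a1 := mul_le_mul_of_nonneg_left h1.1 hμ₁.le
      have a2 := mul_le_mul_of_nonneg_left h2.1 hμ₂.le
      rw [XiStar, if_neg ht]
      constructor
      · rw [le_div_iff₀ hD, one_mul, hnum, e3]
        linarith
      · have hub : t * (μ₁ * coth (t * H₂) + μ₂ * coth (t * H₁) + μ₁ * μ₂ * κ * t)
            ≤ μ₁ * μ₂ * κ * (lam ^ 2 + t ^ 2) + (μ₁ + μ₂) * |t| := by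
          rw [hnum, e3]
          have : (μ₁ + μ₂) * |t| = μ₁ * |t| + μ₂ * |t| := by ring
          linarith
        calc t * (μ₁ * coth (t * H₂) + μ₂ * coth (t * H₁) + μ₁ * μ₂ * κ * t)
              / (μ₁ * μ₂ * κ * (lam ^ 2 + t ^ 2))
            ≤ (μ₁ * μ₂ * κ * (lam ^ 2 + t ^ 2) + (μ₁ + μ₂) * |t|)
              / (μ₁ * μ₂ * κ * (lam ^ 2 + t ^ 2)) := (div_le_div_iff_of_pos_right hD).mpr hub
          _ = 1 + (μ₁ + μ₂) * |t| / (μ₁ * μ₂ * κ * (lam ^ 2 + t ^ 2)) := by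
              rw [add_div, div_self hD.ne']
  -- the pointwise bound on f
  set C : ℝ := μ₁ + μ₂ with hC
  have hbound : ∀ t : ℝ, ‖Real.log (XiStar μ₁ μ₂ H₁ H₂ κ lam t) / t‖
      ≤ C / (μ₁ * μ₂ * κ) * (lam ^ 2 + t ^ 2)⁻¹ := by
    intro t
    have hD : 0 < μ₁ * μ₂ * κ * (lam ^ 2 + t ^ 2) := by positivity
    have hXpos : (0:ℝ) < XiStar μ₁ μ₂ H₁ H₂ κ lam t := lt_of_lt_of_le one_pos (hX t).1
    have hlog0 : 0 ≤ Real.log (XiStar μ₁ μ₂ H₁ H₂ κ lam t) :=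
      Real.log_nonneg (hX t).1
    have hlog1 : Real.log (XiStar μ₁ μ₂ H₁ H₂ κ lam t)
        ≤ C * |t| / (μ₁ * μ₂ * κ * (lam ^ 2 + t ^ 2)) := by
      calc Real.log (XiStar μ₁ μ₂ H₁ H₂ κ lam t)
          ≤ XiStar μ₁ μ₂ H₁ H₂ κ lam t - 1 := Real.log_le_sub_one_of_pos hXpos
        _ ≤ C * |t| / (μ₁ * μ₂ * κ * (lam ^ 2 + t ^ 2)) := by
            have := (hX t).2; linarith
    by_cases ht : t = 0
    · subst ht
      simp only [div_zero, norm_zero]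
      positivity
    · have htpos : 0 < |t| := abs_pos.2 ht
      rw [norm_div, Real.norm_eq_abs, Real.norm_eq_abs, abs_of_nonneg hlog0,
        div_le_iff₀ htpos]
      calc Real.log (XiStar μ₁ μ₂ H₁ H₂ κ lam t)
          ≤ C * |t| / (μ₁ * μ₂ * κ * (lam ^ 2 + t ^ 2)) := hlog1
        _ = C / (μ₁ * μ₂ * κ) * (lam ^ 2 + t ^ 2)⁻¹ * |t| := by
            field_simp; try ring
  -- measurability
  have hmeas : Measurable (fun t : ℝ => Real.log (XiStar μ₁ μ₂ H₁ H₂ κ lam t) / t) := by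
    apply Measurable.div _ measurable_id
    apply Real.measurable_log.comp
    unfold XiStar
    apply Measurable.ite (measurableSet_singleton 0) measurable_const
    apply Measurable.div
    · apply Measurable.mul measurable_id
      apply Measurable.add
      apply Measurable.add
      · exact (measurable_const.mul ((Real.continuous_cosh.measurable.comp
          (measurable_id.mul measurable_const)).div
          (Real.continuous_sinh.measurable.comp (measurable_id.mul measurable_const))))
      · exact (measurable_const.mul ((Real.continuous_cosh.measurable.comp
          (measurable_id.mul measurable_const)).div
          (Real.continuous_sinh.measurable.comp (measurable_id.mul measurable_const))))
      · exact measurable_const.mul measurable_id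
    · exact measurable_const.mul (measurable_const.add (measurable_id.pow_const 2))
  -- integrable majorant
  have hg : MeasureTheory.Integrable
      (fun t : ℝ => C / (μ₁ * μ₂ * κ) * (lam ^ 2 + t ^ 2)⁻¹) := by
    have h0 : MeasureTheory.Integrable (fun x : ℝ => (1 + x ^ 2)⁻¹) :=
      integrable_inv_one_add_sq
    have h1 : MeasureTheory.Integrable (fun x : ℝ => (1 + (x / lam) ^ 2)⁻¹) :=
      h0.comp_div hlampos.ne'
    have h2 := h1.const_mul ((lam ^ 2)⁻¹)
    apply (h2.const_mul (C / (μ₁ * μ₂ * κ))).congr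
    filter_upwards with x
    have : lam ^ 2 + x ^ 2 = lam ^ 2 * (1 + (x / lam) ^ 2) := by
      field_simp
    rw [this, mul_inv]
    try ring
  have hint : MeasureTheory.Integrable
      (fun t : ℝ => Real.log (XiStar μ₁ μ₂ H₁ H₂ κ lam t) / t) := by
    apply MeasureTheory.Integrable.mono' hg hmeas.aestronglyMeasurable
    filter_upwards with t
    exact hbound t
  refine ⟨hint, ?_⟩
  -- oddness
  have hXeven : ∀ t : ℝ, XiStar μ₁ μ₂ H₁ H₂ κ lam (-t) = XiStar μ₁ μ₂ H₁ H₂ κ lam t := by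
    intro t
    by_cases ht : t = 0
    · subst ht; simp
    · rw [XiStar, XiStar, if_neg (neg_ne_zero.2 ht), if_neg ht]
      rw [show (-t) * H₂ = -(t * H₂) by ring, show (-t) * H₁ = -(t * H₁) by ring,
        coth_neg', coth_neg']
      try ring_nf
  have hodd : ∀ t : ℝ, Real.log (XiStar μ₁ μ₂ H₁ H₂ κ lam (-t)) / (-t)
      = -(Real.log (XiStar μ₁ μ₂ H₁ H₂ κ lam t) / t) := by
    intro t
    rw [hXeven t, div_neg]
  have h1 : ∫ t : ℝ, Real.log (XiStar μ₁ μ₂ H₁ H₂ κ lam t) / t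
      = ∫ t : ℝ, Real.log (XiStar μ₁ μ₂ H₁ H₂ κ lam (-t)) / (-t) :=
    (MeasureTheory.integral_neg_eq_self _ _).symm
  have h2 : ∫ t : ℝ, Real.log (XiStar μ₁ μ₂ H₁ H₂ κ lam (-t)) / (-t)
      = -∫ t : ℝ, Real.log (XiStar μ₁ μ₂ H₁ H₂ κ lam t) / t := by
    rw [← MeasureTheory.integral_neg]
    exact MeasureTheory.integral_congr_ae (Filter.Eventually.of_forall hodd)
  linarith [h1, h2]
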